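/- arXiv:2504.20017 — 3 statements merged into one kernel-verified Lean document; each statement's English description precedes it below -/
import Mathlib

section
/- Let n = 4k for a positive integer k, and define a matrix A of order n by a_{ij} = (i-1)n + j if i and j lie in the same part of the partition {B_out, B_in}, and a_{ij} = n²+1-((i-1)n+j) otherwise. Then for every column j, the sum ∑_{i=1}^n a_{ij} = n(n²+1)/2. -/
/-!
Split the rows into `B_out` and `B_in = Icc (k+1) (3k)`. Both parts have `2k` elements and are
invariant under the reflection `i ↦ n + 1 - i`, so every function of the row index that is affine,
such as `i ↦ (i - 1) n + j`, has the same sum over either part. A column takes these values on one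
part and their complements `n² + 1 - ·` on the other, so the affine contributions cancel and the
column sum is `2k (n² + 1) = n (n² + 1) / 2`.
-/

open Finset

theorem two_mul_sum_eq_card_mul_of_reflect_mem {s : Finset ℕ} {m : ℕ}
    (hs : ∀ i ∈ s, i ≤ m ∧ m - i ∈ s) :
    2 * ∑ i ∈ s, (i : ℤ) = s.card * m := by
  have hreflect : ∑ i ∈ s, (i : ℤ) = ∑ i ∈ s, ((m : ℤ) - i) :=
    sum_nbij' (m - ·) (m - ·) (fun i hi => (hs i hi).2) (fun i hi => (hs i hi).2)
      (fun i hi => by have := (hs i hi).1; omega) (fun i hi => by have := (hs i hi).1; omega)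
      (fun i hi => by push_cast [Nat.cast_sub (hs i hi).1]; ring)
  calc 2 * ∑ i ∈ s, (i : ℤ) = ∑ i ∈ s, ((i : ℤ) + (m - i)) := by
        rw [sum_add_distrib, ← hreflect, two_mul]
    _ = s.card * m := by simp

theorem sum_affine_eq_of_card_eq_of_sum_eq {R : Type*} [CommRing R] {s t : Finset ℕ}
    (hcard : s.card = t.card) (hsum : ∑ i ∈ s, (i : R) = ∑ i ∈ t, (i : R)) (α β : R) :
    ∑ i ∈ s, (α * i + β) = ∑ i ∈ t, (α * i + β) := by
  simp only [sum_add_distrib, ← mul_sum, hsum, sum_const, hcard]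

theorem sum_union_ite_iff_compl {ι R : Type*} [DecidableEq ι] [AddCommGroup R]
    {s t : Finset ι} (hst : Disjoint s t) (hcard : s.card = t.card) {f : ι → R}
    (hf : ∑ i ∈ s, f i = ∑ i ∈ t, f i) (p : Prop) [Decidable p] (c : R) :
    ∑ i ∈ s ∪ t, (if (i ∈ s ↔ p) then f i else c - f i) = t.card • c := by
  have hnot : ∀ i ∈ t, i ∉ s := fun i hi his => disjoint_left.mp hst his hi
  rw [sum_union hst]
  by_cases hp : p
  · rw [sum_congr rfl fun i hi => if_pos (iff_of_true hi hp),
      sum_congr rfl fun i hi => if_neg fun h => hnot i hi (h.mpr hp),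
      sum_sub_distrib, sum_const, hf, add_sub_cancel]
  · rw [sum_congr rfl fun i hi => if_neg fun h => hp (h.mp hi),
      sum_congr rfl fun i hi => if_pos (iff_of_false (hnot i hi) hp),
      sum_sub_distrib, sum_const, ← hf, hcard, sub_add_cancel]

theorem sub_one_mul_add_le_sq {n i j : ℕ} (hi : i ≤ n) (hj : j ≤ n) :
    (i - 1) * n + j ≤ n ^ 2 := by
  rcases n with _ | n
  · simp_all
  · calc (i - 1) * (n + 1) + j ≤ n * (n + 1) + (n + 1) :=
          add_le_add (Nat.mul_le_mul_right _ (by omega)) hj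
      _ = (n + 1) ^ 2 := by ring

theorem natCast_ite_entry {n i j : ℕ} (p : Prop) [Decidable p]
    (hi₁ : 1 ≤ i) (hi : i ≤ n) (hj : j ≤ n) :
    (((if p then (i - 1) * n + j else n ^ 2 + 1 - ((i - 1) * n + j) : ℕ)) : ℤ) =
      if p then (n : ℤ) * i + ((j : ℤ) - n)
      else ((n : ℤ) ^ 2 + 1) - ((n : ℤ) * i + ((j : ℤ) - n)) := by
  have hle : (i - 1) * n + j ≤ n ^ 2 + 1 := (sub_one_mul_add_le_sq hi hj).trans (Nat.le_succ _)
  split_ifs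
  · push_cast [Nat.cast_sub hi₁]; ring
  · push_cast [Nat.cast_sub hle, Nat.cast_sub hi₁]; ring

def outerRows (k : ℕ) : Finset ℕ := Icc 1 k ∪ Icc (3 * k + 1) (4 * k)

def innerRows (k : ℕ) : Finset ℕ := Icc (k + 1) (3 * k)

section Rows

variable (k : ℕ)

theorem outerRows_union_innerRows : outerRows k ∪ innerRows k = Icc 1 (4 * k) := by
  ext i; simp only [outerRows, innerRows, mem_union, mem_Icc]; omega

theorem disjoint_outerRows_innerRows : Disjoint (outerRows k) (innerRows k) := by
  rw [disjoint_left]; simp only [outerRows, innerRows, mem_union, mem_Icc]; omega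

theorem card_outerRows : (outerRows k).card = 2 * k := by
  rw [outerRows, card_union_of_disjoint (disjoint_left.mpr (by simp only [mem_Icc]; omega))]
  simp only [Nat.card_Icc]; omega

theorem card_innerRows : (innerRows k).card = 2 * k := by
  simp only [innerRows, Nat.card_Icc]; omega

theorem card_outerRows_eq_card_innerRows : (outerRows k).card = (innerRows k).card := by
  rw [card_outerRows, card_innerRows]

theorem sum_outerRows_eq_sum_innerRows :
    ∑ i ∈ outerRows k, (i : ℤ) = ∑ i ∈ innerRows k, (i : ℤ) := by
  have hout := two_mul_sum_eq_card_mul_of_reflect_mem (s := outerRows k) (m := 4 * k + 1)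
    (by intro i; simp only [outerRows, mem_union, mem_Icc]; omega)
  have hin := two_mul_sum_eq_card_mul_of_reflect_mem (s := innerRows k) (m := 4 * k + 1)
    (by intro i; simp only [innerRows, mem_Icc]; omega)
  rw [card_outerRows_eq_card_innerRows] at hout
  omega

end Rows

theorem doubly_even_col_sums_general (k n : ℕ) (hn : n = 4 * k)
    (Bout : Finset ℕ) (hB : Bout = Icc 1 k ∪ Icc (3 * k + 1) (4 * k))
    (a : ℕ → ℕ → ℕ)
    (ha : ∀ i j, a i j =
      if (i ∈ Bout ↔ j ∈ Bout) then (i - 1) * n + j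
      else n ^ 2 + 1 - ((i - 1) * n + j)) :
    ∀ j ∈ Icc 1 n, (∑ i ∈ Icc 1 n, a i j) = n * (n ^ 2 + 1) / 2 := by
  intro j hj
  obtain rfl : Bout = outerRows k := hB
  have hrows : outerRows k ∪ innerRows k = Icc 1 n := hn ▸ outerRows_union_innerRows k
  have hcard := card_outerRows_eq_card_innerRows k
  have hentry : ∀ i ∈ outerRows k ∪ innerRows k, (a i j : ℤ) =
      if (i ∈ outerRows k ↔ j ∈ outerRows k) then (n : ℤ) * i + ((j : ℤ) - n)
      else ((n : ℤ) ^ 2 + 1) - ((n : ℤ) * i + ((j : ℤ) - n)) := by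
    intro i hi
    rw [hrows, mem_Icc] at hi
    rw [ha, natCast_ite_entry _ hi.1 hi.2 (mem_Icc.mp hj).2]
  have hcol : ∑ i ∈ Icc 1 n, (a i j : ℤ) = 2 * k * ((n : ℤ) ^ 2 + 1) := by
    rw [← hrows, sum_congr rfl hentry,
      sum_union_ite_iff_compl (disjoint_outerRows_innerRows k) hcard
        (sum_affine_eq_of_card_eq_of_sum_eq hcard (sum_outerRows_eq_sum_innerRows k) _ _),
      card_innerRows, nsmul_eq_mul]
    push_cast; ring
  have hhalf : n * (n ^ 2 + 1) / 2 = 2 * k * (n ^ 2 + 1) := by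
    rw [hn, show 4 * k * ((4 * k) ^ 2 + 1) = 2 * (2 * k * ((4 * k) ^ 2 + 1)) by ring,
      Nat.mul_div_cancel_left _ two_pos]
  rw [hhalf]
  exact_mod_cast hcol

theorem doubly_even_col_sums (k n : ℕ) (hk : 0 < k) (hn : n = 4 * k)
    (Bout : Finset ℕ) (hB : Bout = Icc 1 k ∪ Icc (3 * k + 1) (4 * k))
    (a : ℕ → ℕ → ℕ)
    (ha : ∀ i j, a i j =
      if (i ∈ Bout ↔ j ∈ Bout) then (i - 1) * n + j
      else n ^ 2 + 1 - ((i - 1) * n + j)) :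
    ∀ j ∈ Icc 1 n, (∑ i ∈ Icc 1 n, a i j) = n * (n ^ 2 + 1) / 2 :=
  doubly_even_col_sums_general k n hn Bout hB a ha
end

section
/- Let n = 4k for a positive integer k and let A be defined by a_{ij} = (i-1)n + j if (i ∈ B_out ↔ j ∈ B_out) and a_{ij} = n²+1-((i-1)n+j) otherwise. Then the map (i,j) ↦ a_{ij} from {1,...,n}×{1,...,n} to {1,...,n²} is a bijection. -/
/-!
The row-major index `(i, j) ↦ (i - 1) * n + j` is a bijection from the `n × n` grid onto `[1, n²]`,
and it turns the point reflection `(i, j) ↦ (n + 1 - i, n + 1 - j)` of the grid into `v ↦ n² + 1 - v`.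
So `a` is the row-major index composed with the map `τ` that fixes the cells with
`i ∈ B_out ↔ j ∈ B_out` and reflects the others. Since `B_out` is symmetric under
`i ↦ n + 1 - i`, the reflection preserves that condition, hence `τ` is an
involution of the grid and `a` is a composite of two bijections.
-/

section

open Set

lemma bijOn_ite_of_invOn {α : Type*} {s : Set α} {σ : α → α} (P : α → Prop) [DecidablePred P]
    (hσ : InvOn σ σ s s) (hs : MapsTo σ s s) (hP : ∀ x ∈ s, P (σ x) ↔ P x) :
    BijOn (fun x => if P x then x else σ x) s s := by
  have hmaps : MapsTo (fun x => if P x then x else σ x) s s := by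
    intro x hx
    dsimp only
    split_ifs
    exacts [hx, hs hx]
  have hinv : LeftInvOn (fun x => if P x then x else σ x) (fun x => if P x then x else σ x) s := by
    intro x hx
    by_cases h : P x
    · simp only [if_pos h]
    · have h' : ¬ P (σ x) := (hP x hx).not.mpr h
      simp only [if_neg h, if_neg h', hσ.1 hx]
  exact InvOn.bijOn ⟨hinv, hinv⟩ hmaps hmaps

def rowMajor (n : ℕ) (p : ℕ × ℕ) : ℕ := (p.1 - 1) * n + p.2

def reflect (m n : ℕ) (p : ℕ × ℕ) : ℕ × ℕ := (m + 1 - p.1, n + 1 - p.2)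

lemma mapsTo_reflect (m n : ℕ) :
    MapsTo (reflect m n) (Icc 1 m ×ˢ Icc 1 n) (Icc 1 m ×ˢ Icc 1 n) := by
  rintro ⟨i, j⟩ ⟨⟨hi₁, hi₂⟩, hj₁, hj₂⟩
  simp only [reflect, mem_prod, mem_Icc]
  omega

lemma invOn_reflect (m n : ℕ) :
    InvOn (reflect m n) (reflect m n) (Icc 1 m ×ˢ Icc 1 n) (Icc 1 m ×ˢ Icc 1 n) := by
  have h : LeftInvOn (reflect m n) (reflect m n) (Icc 1 m ×ˢ Icc 1 n) := by
    rintro ⟨i, j⟩ ⟨⟨hi₁, hi₂⟩, hj₁, hj₂⟩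
    simp only [reflect, Prod.mk.injEq]
    omega
  exact ⟨h, h⟩

lemma bijOn_rowMajor (m n : ℕ) :
    BijOn (rowMajor n) (Icc 1 m ×ˢ Icc 1 n) (Icc 1 (m * n)) := by
  let unrank : ℕ → ℕ × ℕ := fun v => ((v - 1) / n + 1, (v - 1) % n + 1)
  refine InvOn.bijOn (f' := unrank) ⟨?_, ?_⟩ ?_ ?_
  · rintro ⟨i, j⟩ ⟨⟨hi₁, -⟩, hj₁, hj₂⟩
    have hv : (i - 1) * n + j - 1 = (j - 1) + n * (i - 1) := by rw [Nat.mul_comm]; omega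
    simp only [unrank, rowMajor, hv, Nat.add_mul_div_left _ _ (by omega : 0 < n),
      Nat.add_mul_mod_self_left, Nat.div_eq_of_lt (by omega : j - 1 < n),
      Nat.mod_eq_of_lt (by omega : j - 1 < n), Prod.mk.injEq]
    omega
  · rintro v ⟨hv₁, -⟩
    have := Nat.div_add_mod' (v - 1) n
    simp only [unrank, rowMajor, Nat.add_sub_cancel]
    omega
  · rintro ⟨i, j⟩ ⟨⟨hi₁, hi₂⟩, hj₁, hj₂⟩
    have : (i - 1) * n ≤ (m - 1) * n := Nat.mul_le_mul_right n (by omega)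
    have : (m - 1) * n + n = m * n := by
      rw [← Nat.succ_mul, Nat.succ_eq_add_one, Nat.sub_add_cancel (by omega)]
    simp only [rowMajor, mem_Icc]
    omega
  · rintro v ⟨hv₁, hv₂⟩
    have hn : 0 < n := Nat.pos_of_ne_zero (by rintro rfl; rw [Nat.mul_zero] at hv₂; omega)
    have hq : (v - 1) / n < m := (Nat.div_lt_iff_lt_mul hn).mpr (by omega)
    exact ⟨⟨Nat.le_add_left 1 _, hq⟩, Nat.le_add_left 1 _, Nat.mod_lt (v - 1) hn⟩

lemma rowMajor_reflect {m n : ℕ} {p : ℕ × ℕ} (hp : p ∈ Icc 1 m ×ˢ Icc 1 n) :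
    rowMajor n (reflect m n p) = m * n + 1 - rowMajor n p := by
  obtain ⟨i, j⟩ := p
  obtain ⟨⟨hi₁, hi₂⟩, -, hj₂⟩ := hp
  obtain ⟨a, rfl⟩ : ∃ a, i = a + 1 := ⟨i - 1, by omega⟩
  obtain ⟨b, rfl⟩ : ∃ b, m = a + 1 + b := ⟨m - (a + 1), by omega⟩
  have hm : (a + 1 + b) * n = a * n + b * n + n := by ring
  simp only [rowMajor, reflect, hm]
  rw [show a + 1 + b + 1 - (a + 1) - 1 = b by omega, Nat.add_sub_cancel]
  omega

lemma mem_Icc_union_Icc_iff_reflect (k : ℕ) {i : ℕ} (hi : i ∈ Icc 1 (4 * k)) :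
    i ∈ Finset.Icc 1 k ∪ Finset.Icc (3 * k + 1) (4 * k) ↔
      4 * k + 1 - i ∈ Finset.Icc 1 k ∪ Finset.Icc (3 * k + 1) (4 * k) := by
  simp only [Finset.mem_union, Finset.mem_Icc]
  simp only [mem_Icc] at hi
  omega

end

open Finset

theorem doubly_even_bijective_general (k n : ℕ) (hn : n = 4 * k)
    (Bout : Finset ℕ) (hB : Bout = Icc 1 k ∪ Icc (3 * k + 1) (4 * k))
    (a : ℕ → ℕ → ℕ)
    (ha : ∀ i j, a i j =
      if (i ∈ Bout ↔ j ∈ Bout) then (i - 1) * n + j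
      else n ^ 2 + 1 - ((i - 1) * n + j)) :
    Set.BijOn (fun p : ℕ × ℕ => a p.1 p.2)
      (Set.Icc 1 n ×ˢ Set.Icc 1 n) (Set.Icc 1 (n ^ 2)) := by
  have hBout : ∀ i ∈ Set.Icc 1 n, i ∈ Bout ↔ n + 1 - i ∈ Bout := by
    subst hn hB
    exact fun i hi => mem_Icc_union_Icc_iff_reflect k hi
  have hτ := bijOn_ite_of_invOn (fun p => p.1 ∈ Bout ↔ p.2 ∈ Bout) (invOn_reflect n n)
    (mapsTo_reflect n n) fun p hp => by rw [hBout _ hp.1, hBout _ hp.2]; rfl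
  rw [sq]
  refine ((bijOn_rowMajor n n).comp hτ).congr fun p hp => ?_
  simp only [Function.comp_apply, ha]
  split_ifs
  · rfl
  · rw [rowMajor_reflect hp, sq]; rfl

theorem doubly_even_bijective (k n : ℕ) (hk : 0 < k) (hn : n = 4 * k)
    (Bout : Finset ℕ) (hB : Bout = Icc 1 k ∪ Icc (3 * k + 1) (4 * k))
    (a : ℕ → ℕ → ℕ)
    (ha : ∀ i j, a i j =
      if (i ∈ Bout ↔ j ∈ Bout) then (i - 1) * n + j
      else n ^ 2 + 1 - ((i - 1) * n + j)) :
    Set.BijOn (fun p : ℕ × ℕ => a p.1 p.2)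
      (Set.Icc 1 n ×ˢ Set.Icc 1 n) (Set.Icc 1 (n ^ 2)) :=
  doubly_even_bijective_general k n hn Bout hB a ha
end

section
/- Let p be an odd positive integer and n = 2p. For ℓ ∈ {1,2,3,4}, let A^ℓ be an order-p magic square whose entries are {(ℓ−1)p²+1, ..., ℓp²}, with all row, column, and diagonal sums equal to C(A^ℓ) = p(p²+1)/2 + p(ℓ−1)p². Form the block matrix A = [[A^1, A^3],[A^4, A^2]]. Then every column of A sums to n(n²+1)/2, every row in the top half sums to n(n²+1)/2 − p³, and every row in the bottom half sums to n(n²+1)/2 + p³. -/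
open Finset

/-! Splitting a row or column of the block matrix at index `p` makes its sum the sum of a line
of two quadrants, i.e. of two magic constants `C(A^ℓ) = c + (ℓ - 1) p³`, where `2c = p³ + p`
(`p (p² + 1)` is always even, so the integer division is exact). Columns meet the quadrants
`{1, 4}` or `{3, 2}`, giving `2c + 3p³ = n (n² + 1) / 2`; top rows meet `{1, 3}` and bottom rows
`{4, 2}`, giving `p³` less and more. -/

theorem sum_Icc_two_mul_ite_le {M : Type*} [AddCommMonoid M] (p : ℕ) (f g : ℕ → M) :
    ∑ i ∈ Icc 1 (2 * p), (if i ≤ p then f i else g (i - p)) =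
      ∑ i ∈ Icc 1 p, f i + ∑ i ∈ Icc 1 p, g i := by
  have hsplit : Icc 1 (2 * p) = Icc 1 p ∪ (Icc 1 p).map (addRightEmbedding p) := by
    ext x
    simp only [mem_union, mem_Icc, mem_map, addRightEmbedding_apply]
    constructor
    · intro hx
      by_cases hxp : x ≤ p
      · exact Or.inl ⟨hx.1, hxp⟩
      · exact Or.inr ⟨x - p, by omega, by omega⟩
    · rintro (hx | ⟨y, hy, rfl⟩) <;> omega
  have hdisj : Disjoint (Icc 1 p) ((Icc 1 p).map (addRightEmbedding p)) := by
    simp only [disjoint_left, mem_Icc, mem_map, addRightEmbedding_apply]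
    rintro x hx ⟨y, hy, rfl⟩
    omega
  rw [hsplit, sum_union hdisj, sum_map]
  congr 1
  · exact sum_congr rfl fun i hi => if_pos (mem_Icc.mp hi).2
  · refine sum_congr rfl fun i hi => ?_
    simp only [addRightEmbedding_apply, Nat.add_sub_cancel]
    exact if_neg (by simp only [mem_Icc] at hi; omega)

theorem even_mul_sq_add_one (p : ℤ) : Even (p * (p ^ 2 + 1)) := by
  rcases Int.even_or_odd p with hp | hp
  · exact hp.mul_right _
  · exact (hp.pow.add_one).mul_left _

theorem block_construction_P1_P2_P3_general (p n : ℕ)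
    (hn : n = 2 * p)
    (Q : ℕ → ℕ → ℕ → ℤ)
    (hrow : ∀ ℓ ∈ Finset.Icc 1 4, ∀ i ∈ Finset.Icc 1 p,
      (∑ j ∈ Finset.Icc 1 p, Q ℓ i j) =
        (p : ℤ) * ((p : ℤ) ^ 2 + 1) / 2 + (p : ℤ) * (ℓ - 1 : ℕ) * (p : ℤ) ^ 2)
    (hcol : ∀ ℓ ∈ Finset.Icc 1 4, ∀ j ∈ Finset.Icc 1 p,
      (∑ i ∈ Finset.Icc 1 p, Q ℓ i j) =
        (p : ℤ) * ((p : ℤ) ^ 2 + 1) / 2 + (p : ℤ) * (ℓ - 1 : ℕ) * (p : ℤ) ^ 2)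
    (A : ℕ → ℕ → ℤ)
    (hA : ∀ i j, A i j =
      if i ≤ p then (if j ≤ p then Q 1 i j else Q 3 i (j - p))
      else (if j ≤ p then Q 4 (i - p) j else Q 2 (i - p) (j - p))) :
    (∀ j ∈ Finset.Icc 1 n,
      (∑ i ∈ Finset.Icc 1 n, A i j) = (n : ℤ) * ((n : ℤ) ^ 2 + 1) / 2) ∧
    (∀ i ∈ Finset.Icc 1 p,
      (∑ j ∈ Finset.Icc 1 n, A i j) =
        (n : ℤ) * ((n : ℤ) ^ 2 + 1) / 2 - (p : ℤ) ^ 3) ∧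
    (∀ i ∈ Finset.Icc (p + 1) n,
      (∑ j ∈ Finset.Icc 1 n, A i j) =
        (n : ℤ) * ((n : ℤ) ^ 2 + 1) / 2 + (p : ℤ) ^ 3) := by
  subst hn
  have hc := Int.two_mul_ediv_two_of_even (even_mul_sq_add_one p)
  have hN : ((2 * p : ℕ) : ℤ) * (((2 * p : ℕ) : ℤ) ^ 2 + 1) / 2 = 4 * (p : ℤ) ^ 3 + p := by
    push_cast
    rw [show 2 * (p : ℤ) * ((2 * p) ^ 2 + 1) = 2 * (4 * p ^ 3 + p) by ring,
      Int.mul_ediv_cancel_left _ two_ne_zero]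
  simp only [mem_Icc] at hrow hcol ⊢
  rw [hN]
  refine ⟨fun j hj => ?_, fun i hi => ?_, fun i hi => ?_⟩
  · rcases le_or_gt j p with hjp | hpj
    · simp only [hA, hjp, if_true]
      rw [sum_Icc_two_mul_ite_le p (fun i => Q 1 i j) (fun i => Q 4 i j),
        hcol 1 (by norm_num) j ⟨hj.1, hjp⟩, hcol 4 (by norm_num) j ⟨hj.1, hjp⟩]
      norm_num
      linear_combination hc
    · simp only [hA, hpj.not_ge, if_false]
      rw [sum_Icc_two_mul_ite_le p (fun i => Q 3 i (j - p)) (fun i => Q 2 i (j - p)),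
        hcol 3 (by norm_num) (j - p) (by omega), hcol 2 (by norm_num) (j - p) (by omega)]
      norm_num
      linear_combination hc
  · simp only [hA, hi.2, if_true]
    rw [sum_Icc_two_mul_ite_le p (Q 1 i) (Q 3 i), hrow 1 (by norm_num) i hi,
      hrow 3 (by norm_num) i hi]
    norm_num
    linear_combination hc
  · simp only [hA, show ¬ i ≤ p by omega, if_false]
    rw [sum_Icc_two_mul_ite_le p (Q 4 (i - p)) (Q 2 (i - p)),
      hrow 4 (by norm_num) (i - p) (by omega), hrow 2 (by norm_num) (i - p) (by omega)]
    norm_num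
    linear_combination hc

theorem block_construction_P1_P2_P3 (p n : ℕ) (hp : 0 < p) (hodd : Odd p)
    (hn : n = 2 * p)
    (Q : ℕ → ℕ → ℕ → ℤ)
    (hbij : ∀ ℓ ∈ Finset.Icc 1 4,
      Set.BijOn (fun q : ℕ × ℕ => Q ℓ q.1 q.2)
        (Set.Icc 1 p ×ˢ Set.Icc 1 p)
        (Set.Icc ((ℓ - 1 : ℕ) * p ^ 2 + 1 : ℤ) ((ℓ : ℤ) * p ^ 2)))
    (hrow : ∀ ℓ ∈ Finset.Icc 1 4, ∀ i ∈ Finset.Icc 1 p,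
      (∑ j ∈ Finset.Icc 1 p, Q ℓ i j) =
        (p : ℤ) * ((p : ℤ) ^ 2 + 1) / 2 + (p : ℤ) * (ℓ - 1 : ℕ) * (p : ℤ) ^ 2)
    (hcol : ∀ ℓ ∈ Finset.Icc 1 4, ∀ j ∈ Finset.Icc 1 p,
      (∑ i ∈ Finset.Icc 1 p, Q ℓ i j) =
        (p : ℤ) * ((p : ℤ) ^ 2 + 1) / 2 + (p : ℤ) * (ℓ - 1 : ℕ) * (p : ℤ) ^ 2)
    (hdiag : ∀ ℓ ∈ Finset.Icc 1 4,
      (∑ i ∈ Finset.Icc 1 p, Q ℓ i i) =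
        (p : ℤ) * ((p : ℤ) ^ 2 + 1) / 2 + (p : ℤ) * (ℓ - 1 : ℕ) * (p : ℤ) ^ 2)
    (hanti : ∀ ℓ ∈ Finset.Icc 1 4,
      (∑ i ∈ Finset.Icc 1 p, Q ℓ i (p + 1 - i)) =
        (p : ℤ) * ((p : ℤ) ^ 2 + 1) / 2 + (p : ℤ) * (ℓ - 1 : ℕ) * (p : ℤ) ^ 2)
    (A : ℕ → ℕ → ℤ)
    (hA : ∀ i j, A i j =
      if i ≤ p then (if j ≤ p then Q 1 i j else Q 3 i (j - p))
      else (if j ≤ p then Q 4 (i - p) j else Q 2 (i - p) (j - p))) :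
    (∀ j ∈ Finset.Icc 1 n,
      (∑ i ∈ Finset.Icc 1 n, A i j) = (n : ℤ) * ((n : ℤ) ^ 2 + 1) / 2) ∧
    (∀ i ∈ Finset.Icc 1 p,
      (∑ j ∈ Finset.Icc 1 n, A i j) =
        (n : ℤ) * ((n : ℤ) ^ 2 + 1) / 2 - (p : ℤ) ^ 3) ∧
    (∀ i ∈ Finset.Icc (p + 1) n,
      (∑ j ∈ Finset.Icc 1 n, A i j) =
        (n : ℤ) * ((n : ℤ) ^ 2 + 1) / 2 + (p : ℤ) ^ 3) :=
  block_construction_P1_P2_P3_general p n hn Q hrow hcol A hA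
end
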